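/- arXiv:2312.09862 — 2 statements merged into one kernel-verified Lean document; each statement's English description precedes it below -/
import Mathlib

section
/- Let Z ∈ ℝ₊^m be multivariate regularly varying with index α and i.i.d. components, and let A ∈ ℝ₊^{d×m} have all column ℓ1-norms positive. Then for X = AZ, the conditional law of X/‖X‖₁ given ‖X‖₁ > τ converges weakly as τ → ∞ to K_A = Σᵢ (‖A_{·i}‖₁^α / Σⱼ ‖A_{·j}‖₁^α) δ_{A_{·i}/‖A_{·i}‖₁}. -/
open MeasureTheory Filter Topology Real
open scoped ENNReal

/-- The conditional law of `X/‖X‖₁` given `‖X‖₁ > τ` for a random vector with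
law `ν` on `Fin d → ℝ`. -/
noncomputable def condAngularL1 (d : ℕ) (ν : Measure (Fin d → ℝ)) (τ : ℝ) :
    Measure (Fin d → ℝ) :=
  ((ν {x | τ < ∑ j, |x j|})⁻¹ • ν.restrict {x | τ < ∑ j, |x j|}).map
    fun x => (∑ j, |x j|)⁻¹ • x

/-!
For `z ≥ 0` one has `‖A z‖₁ = ∑ᵢ cᵢ zᵢ` with `cᵢ = ‖A_{·i}‖₁`, so the event `‖X‖₁ > τ` is the
event `S(Z) := ∑ᵢ cᵢ Zᵢ > τ`. For i.i.d. regularly varying `Zᵢ` this event happens, up to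
`o(P(Z₁ > τ))`, through a single big jump: the disjoint events
`Eᵢ = {cᵢ Zᵢ > τ, Zₖ ≤ δτ for k ≠ i}` have `P(Eᵢ) ~ cᵢ^α P(Z₁ > τ)`, while what remains of
`{S > τ}` lies in the event that two coordinates exceed `δτ`, of order `P(Z₁ > δτ)²`, or in the
shells `(1 - Cδ)τ < cᵢ Zᵢ ≤ τ`, of relative size `(1 - Cδ)^{-α} - 1`. On `Eᵢ` coordinate `i`
carries all but a fraction `Cδ` of `S`, so `X/‖X‖₁` is within `Cδ` of `A_{·i}/cᵢ`. Letting
`τ → ∞` and then `δ → 0` gives `E[f(X/‖X‖₁); ‖X‖₁ > τ] ~ P(Z₁ > τ) ∑ᵢ cᵢ^α f(A_{·i}/cᵢ)`, and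
dividing by the case `f = 1` gives the limit `K_A`.
-/

open Set Function ProbabilityTheory

def IsRegularlyVaryingTail (ρ : Measure ℝ) (α : ℝ) : Prop :=
  ∀ t : ℝ, 0 < t → Tendsto (fun x => ρ.real (Ioi (t * x)) / ρ.real (Ioi x)) atTop (𝓝 (t ^ (-α)))

section Tail

variable {ρ : Measure ℝ} [IsProbabilityMeasure ρ]

lemma tendsto_measureReal_Ioi_atTop : Tendsto (fun x => ρ.real (Ioi x)) atTop (𝓝 0) := by
  have h := (tendsto_cdf_atTop (μ := ρ)).const_sub 1
  rw [sub_self] at h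
  refine h.congr fun x => ?_
  rw [cdf_eq_real, ← probReal_compl_eq_one_sub measurableSet_Iic, compl_Iic]

lemma tendsto_measureReal_Icc_zero_atTop (h0 : ρ (Iio 0) = 0) :
    Tendsto (fun x => ρ.real (Icc 0 x)) atTop (𝓝 1) := by
  refine (tendsto_cdf_atTop (μ := ρ)).congr' ?_
  filter_upwards [eventually_ge_atTop 0] with x hx
  rw [cdf_eq_real, ← Iio_union_Icc_eq_Iic hx]
  refine le_antisymm ((measureReal_union_le _ _).trans ?_) (measureReal_mono subset_union_right)
  rw [measureReal_def, h0, ENNReal.toReal_zero, zero_add]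

lemma IsRegularlyVaryingTail.measureReal_Ioi_pos {α : ℝ} (h : IsRegularlyVaryingTail ρ α)
    (x : ℝ) : 0 < ρ.real (Ioi x) := by
  by_contra! hx
  have hx0 : ρ (Ioi x) = 0 := (measureReal_eq_zero_iff).1 (le_antisymm hx measureReal_nonneg)
  have hlim : Tendsto (fun y => ρ.real (Ioi (1 * y)) / ρ.real (Ioi y)) atTop (𝓝 0) := by
    refine tendsto_const_nhds.congr' ?_
    filter_upwards [eventually_ge_atTop x] with y hy
    rw [(measureReal_eq_zero_iff).2 (measure_mono_null (Ioi_subset_Ioi hy) hx0), div_zero]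
  have := tendsto_nhds_unique (h 1 one_pos) hlim
  rw [one_rpow] at this
  exact one_ne_zero this

end Tail

lemma tendsto_of_forall_exists_eventually_dist_le {β E : Type*} [PseudoMetricSpace E]
    {l : Filter β} {f : β → E} {L : E}
    (h : ∀ ε > 0, ∃ u : β → ℝ, ∃ r < ε, Tendsto u l (𝓝 r) ∧ ∀ᶠ x in l, dist (f x) L ≤ u x) :
    Tendsto f l (𝓝 L) := by
  refine Metric.tendsto_nhds.2 fun ε hε => ?_
  obtain ⟨u, r, hr, hu, hle⟩ := h ε hε
  filter_upwards [hle, hu.eventually (eventually_lt_nhds hr)] with x h1 h2 using h1.trans_lt h2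

lemma dist_div_le_of_abs_sub_le {N P B F L : ℝ} (hF : 0 < F) (h : |N - P| ≤ B) :
    dist (N / F) L ≤ B / F + dist (P / F) L := by
  refine (dist_triangle _ (P / F) L).trans (add_le_add ?_ le_rfl)
  rw [Real.dist_eq, ← sub_div, abs_div, abs_of_pos hF]
  exact div_le_div_of_nonneg_right h hF.le

lemma exists_pos_forall_dist_le_imp_dist_le {ι X Y : Type*} [Finite ι] [PseudoMetricSpace X]
    [PseudoMetricSpace Y] {f : X → Y} {ω : ι → X} (hf : ∀ i, ContinuousAt f (ω i)) {η : ℝ}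
    (hη : 0 < η) : ∃ κ > 0, ∀ i y, dist y (ω i) ≤ κ → dist (f y) (f (ω i)) ≤ η := by
  have h : ∀ᶠ κ in 𝓝[>] (0 : ℝ), ∀ i y, dist y (ω i) ≤ κ → dist (f y) (f (ω i)) ≤ η := by
    refine eventually_all.2 fun i => ?_
    obtain ⟨r, hr, hfr⟩ := Metric.continuousAt_iff.1 (hf i) η hη
    filter_upwards [Ioo_mem_nhdsGT hr] with κ hκ y hy using (hfr (hy.trans_lt hκ.2)).le
  obtain ⟨κ, hκ, hκ0⟩ := (h.and self_mem_nhdsWithin).exists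
  exact ⟨κ, hκ0, hκ⟩

lemma abs_setIntegral_sub_sum_le {X ι : Type*} [MeasurableSpace X] [Fintype ι] {μ : Measure X}
    [IsFiniteMeasure μ] {φ : X → ℝ} (hφ : Integrable φ μ) {M η : ℝ} (hM : ∀ x, |φ x| ≤ M)
    {T : Set X} {E : ι → Set X} (hE : ∀ i, MeasurableSet (E i)) (hdisj : Pairwise (Disjoint on E))
    (hET : ∀ i, E i ⊆ T) {v : ι → ℝ} (hv : ∀ i, ∀ x ∈ E i, |φ x - v i| ≤ η) :
    |∫ x in T, φ x ∂μ - ∑ i, v i * μ.real (E i)|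
      ≤ η * ∑ i, μ.real (E i) + M * μ.real (T \ ⋃ i, E i) := by
  have hsplit : ∫ x in T, φ x ∂μ = ∑ i, ∫ x in E i, φ x ∂μ + ∫ x in T \ ⋃ i, E i, φ x ∂μ := by
    rw [← integral_inter_add_sdiff (MeasurableSet.iUnion hE) hφ.integrableOn,
      inter_eq_right.2 (iUnion_subset hET), integral_iUnion_fintype hE hdisj
        fun i => hφ.integrableOn]
  have hpiece : ∀ i, |∫ x in E i, φ x ∂μ - v i * μ.real (E i)| ≤ η * μ.real (E i) := by
    intro i
    rw [mul_comm (v i), ← smul_eq_mul, ← setIntegral_const,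
      ← integral_sub hφ.integrableOn (integrableOn_const (measure_ne_top μ _))]
    simpa only [Real.norm_eq_abs] using
      norm_setIntegral_le_of_norm_le_const (f := fun x => φ x - v i) (measure_lt_top μ _)
        (by simpa only [Real.norm_eq_abs] using hv i)
  have hrest : |∫ x in T \ ⋃ i, E i, φ x ∂μ| ≤ M * μ.real (T \ ⋃ i, E i) := by
    simpa only [Real.norm_eq_abs] using norm_setIntegral_le_of_norm_le_const
      (measure_lt_top μ _) fun x _ => (Real.norm_eq_abs (φ x)).trans_le (hM x)
  rw [hsplit, add_sub_right_comm, ← Finset.sum_sub_distrib, Finset.mul_sum]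
  exact (abs_add_le _ _).trans (add_le_add
    ((Finset.abs_sum_le_sum_abs _ _).trans (Finset.sum_le_sum fun i _ => hpiece i)) hrest)

section Events

variable {ι : Type*}

def twoLargeSet (b : ℝ) : Set (ι → ℝ) := {z | ∃ i j, i ≠ j ∧ b < z i ∧ b < z j}

variable [DecidableEq ι]

def bigJumpSet (i : ι) (a b : ℝ) : Set (ι → ℝ) :=
  univ.pi (update (fun _ => Icc 0 b) i (Ioi a))

lemma mem_bigJumpSet {i : ι} {a b : ℝ} {z : ι → ℝ} :
    z ∈ bigJumpSet i a b ↔ a < z i ∧ ∀ k, k ≠ i → z k ∈ Icc 0 b := by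
  simp only [bigJumpSet, mem_univ_pi]
  constructor
  · intro h
    exact ⟨by simpa using h i, fun k hk => by simpa [hk] using h k⟩
  · rintro ⟨hi, hk⟩ k
    by_cases hki : k = i
    · subst hki; simpa using hi
    · simpa [hki] using hk k hki

lemma pairwise_disjoint_bigJumpSet {a : ι → ℝ} {b : ℝ} (hab : ∀ i, b ≤ a i) :
    Pairwise (Disjoint on fun i => bigJumpSet i (a i) b) := by
  intro i j hij
  refine Set.disjoint_left.2 fun z hzi hzj => ?_
  rw [mem_bigJumpSet] at hzi hzj
  linarith [hzi.1, (hzj.2 i hij).2, hab i]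

variable [Fintype ι] {c : ι → ℝ}

lemma measurableSet_bigJumpSet (i : ι) (a b : ℝ) : MeasurableSet (bigJumpSet i a b) := by
  refine MeasurableSet.univ_pi fun k => ?_
  by_cases hk : k = i
  · subst hk; simp
  · simp [hk]

lemma sum_mul_sub_mul_le (hc : ∀ k, 0 ≤ c k) {i : ι} {b : ℝ} (hb : 0 ≤ b) {z : ι → ℝ}
    (hz : ∀ k, k ≠ i → z k ∈ Icc 0 b) :
    ∑ k, c k * z k - c i * z i ≤ (∑ k, c k) * b := by
  rw [← Finset.add_sum_erase _ _ (Finset.mem_univ i), add_sub_cancel_left, Finset.sum_mul]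
  calc ∑ k ∈ Finset.univ.erase i, c k * z k
      ≤ ∑ k ∈ Finset.univ.erase i, c k * b := Finset.sum_le_sum fun k hk =>
        mul_le_mul_of_nonneg_left (hz k (Finset.ne_of_mem_erase hk)).2 (hc k)
    _ ≤ ∑ k, c k * b := Finset.sum_le_sum_of_subset_of_nonneg (Finset.erase_subset _ _)
        fun k _ _ => mul_nonneg (hc k) hb

lemma bigJumpSet_subset_setOf_lt_sum (hc : ∀ k, 0 < c k) {i : ι} {a b τ : ℝ}
    (hτ : τ ≤ c i * a) : bigJumpSet i a b ⊆ {z | τ < ∑ k, c k * z k} := by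
  intro z hz
  rw [mem_bigJumpSet] at hz
  have hrest : 0 ≤ ∑ k ∈ Finset.univ.erase i, c k * z k := Finset.sum_nonneg fun k hk =>
    mul_nonneg (hc k).le (hz.2 k (Finset.ne_of_mem_erase hk)).1
  show τ < ∑ k, c k * z k
  rw [← Finset.add_sum_erase _ _ (Finset.mem_univ i)]
  nlinarith [mul_lt_mul_of_pos_left hz.1 (hc i)]

lemma bigJumpSet_one_div_subset (hc : ∀ k, 0 < c k) (i : ι) (b τ : ℝ) :
    bigJumpSet i (1 / c i * τ) b ⊆ {z | τ < ∑ k, c k * z k} :=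
  bigJumpSet_subset_setOf_lt_sum hc (by rw [← mul_assoc, mul_one_div_cancel (hc i).ne', one_mul])

lemma pairwise_disjoint_bigJumpSet_one_div (hc : ∀ k, 0 < c k) {δ τ : ℝ} (hδ : 0 < δ)
    (hCδ : (∑ k, c k) * δ < 1) (hτ : 0 < τ) :
    Pairwise (Disjoint on fun i => bigJumpSet i (1 / c i * τ) (δ * τ)) :=
  pairwise_disjoint_bigJumpSet fun i => by
    have hci : c i ≤ ∑ k, c k := Finset.single_le_sum (fun k _ => (hc k).le) (Finset.mem_univ i)
    refine mul_le_mul_of_nonneg_right ((le_div_iff₀ (hc i)).2 ?_) hτ.le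
    nlinarith

lemma mem_twoLargeSet_or_exists_mem_bigJumpSet (hc : ∀ k, 0 < c k) {b τ : ℝ} (hb : 0 ≤ b)
    (hbτ : (∑ k, c k) * b < τ) {z : ι → ℝ} (hz : 0 ≤ z) (hzτ : τ < ∑ k, c k * z k) :
    z ∈ twoLargeSet b ∨ ∃ i, z ∈ bigJumpSet i ((τ - (∑ k, c k) * b) / c i) b := by
  by_cases htwo : z ∈ twoLargeSet b
  · exact Or.inl htwo
  right
  simp only [twoLargeSet, mem_ofPred_eq, not_exists, not_and, not_lt] at htwo
  obtain ⟨i, hi⟩ : ∃ i, b < z i := by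
    by_contra! hall
    have : ∑ k, c k * z k ≤ (∑ k, c k) * b := by
      rw [Finset.sum_mul]
      exact Finset.sum_le_sum fun k _ => mul_le_mul_of_nonneg_left (hall k) (hc k).le
    linarith
  have hsmall : ∀ k, k ≠ i → z k ∈ Icc 0 b := fun k hk => ⟨hz k, htwo i k (Ne.symm hk) hi⟩
  have hrest := sum_mul_sub_mul_le (fun k => (hc k).le) hb hsmall
  refine ⟨i, mem_bigJumpSet.2 ⟨?_, hsmall⟩⟩
  rw [div_lt_iff₀' (hc i)]
  linarith

end Events

section ProductMeasure

variable {ι : Type*} [Fintype ι] {ρ : Measure ℝ} [IsProbabilityMeasure ρ] {α : ℝ}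

lemma ae_nonneg_pi (h0 : ρ (Iio 0) = 0) : ∀ᵐ z ∂(Measure.pi fun _ : ι => ρ), 0 ≤ z := by
  have h : ∀ᵐ x ∂ρ, 0 ≤ x := by
    rw [ae_iff]
    simp only [not_le]
    exact h0
  exact eventually_all.2 fun k =>
    (measurePreserving_eval (fun _ : ι => ρ) k).quasiMeasurePreserving.ae h

lemma measureReal_twoLargeSet_le (b : ℝ) :
    (Measure.pi fun _ : ι => ρ).real (twoLargeSet b)
      ≤ Fintype.card ι ^ 2 * ρ.real (Ioi b) ^ 2 := by
  set μ := Measure.pi fun _ : ι => ρ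
  have hpair : ∀ p : ι × ι,
      μ.real {z | p.1 ≠ p.2 ∧ b < z p.1 ∧ b < z p.2} ≤ ρ.real (Ioi b) ^ 2 := by
    rintro ⟨i, j⟩
    by_cases hij : i = j
    · simp [hij]
    have hind := (iIndepFun_pi (X := fun _ : ι => id) (μ := fun _ => ρ)
      fun _ => aemeasurable_id).indepFun hij
    have hcoord : ∀ k, μ (eval k ⁻¹' Ioi b) = ρ (Ioi b) := fun k =>
      (measurePreserving_eval (fun _ : ι => ρ) k).measure_preimage
        measurableSet_Ioi.nullMeasurableSet
    have h := hind.measure_inter_preimage_eq_mul (Ioi b) (Ioi b) measurableSet_Ioi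
      measurableSet_Ioi
    simp only [hij, ne_eq, not_false_eq_true, true_and]
    refine le_of_eq ?_
    rw [measureReal_def, sq, measureReal_def, ← ENNReal.toReal_mul]
    nth_rw 1 [← hcoord i]
    rw [← hcoord j]
    exact congrArg ENNReal.toReal h
  have hcover : twoLargeSet b ⊆ ⋃ p : ι × ι, {z | p.1 ≠ p.2 ∧ b < z p.1 ∧ b < z p.2} := by
    rintro z ⟨i, j, hij, hi, hj⟩
    exact mem_iUnion.2 ⟨(i, j), hij, hi, hj⟩
  calc μ.real (twoLargeSet b)
      ≤ ∑ p : ι × ι, μ.real {z | p.1 ≠ p.2 ∧ b < z p.1 ∧ b < z p.2} :=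
        (measureReal_mono hcover).trans (measureReal_iUnion_fintype_le _)
    _ ≤ ∑ _p : ι × ι, ρ.real (Ioi b) ^ 2 := Finset.sum_le_sum fun p _ => hpair p
    _ = Fintype.card ι ^ 2 * ρ.real (Ioi b) ^ 2 := by
        simp [Finset.card_univ, Fintype.card_prod, sq]

lemma IsRegularlyVaryingTail.tendsto_measureReal_twoLargeSet_div
    (hRV : IsRegularlyVaryingTail ρ α) {δ : ℝ} (hδ : 0 < δ) :
    Tendsto (fun τ => (Measure.pi fun _ : ι => ρ).real (twoLargeSet (δ * τ))
      / ρ.real (Ioi τ)) atTop (𝓝 0) := by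
  have htail := (tendsto_measureReal_Ioi_atTop (ρ := ρ)).comp (tendsto_id.const_mul_atTop hδ)
  have h := ((hRV δ hδ).mul htail).const_mul (Fintype.card ι ^ 2 : ℝ)
  rw [mul_zero, mul_zero] at h
  refine tendsto_of_tendsto_of_tendsto_of_le_of_le tendsto_const_nhds h
    (fun τ => div_nonneg measureReal_nonneg measureReal_nonneg) fun τ => ?_
  have hF := hRV.measureReal_Ioi_pos τ
  calc (Measure.pi fun _ : ι => ρ).real (twoLargeSet (δ * τ)) / ρ.real (Ioi τ)
      ≤ Fintype.card ι ^ 2 * ρ.real (Ioi (δ * τ)) ^ 2 / ρ.real (Ioi τ) := by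
        gcongr
        exact measureReal_twoLargeSet_le _
    _ = _ := by simp only [Function.comp_apply, id]; ring

variable [DecidableEq ι]

lemma measureReal_bigJumpSet (i : ι) (a b : ℝ) :
    (Measure.pi fun _ : ι => ρ).real (bigJumpSet i a b)
      = ρ.real (Ioi a) * ρ.real (Icc 0 b) ^ (Fintype.card ι - 1) := by
  rw [measureReal_def, bigJumpSet, Measure.pi_pi, ENNReal.toReal_prod,
    ← Finset.mul_prod_erase _ _ (Finset.mem_univ i)]
  rw [Finset.prod_congr rfl fun k hk => by rw [update_of_ne (Finset.ne_of_mem_erase hk)]]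
  simp [measureReal_def, Finset.card_erase_of_mem]

lemma IsRegularlyVaryingTail.tendsto_measureReal_bigJumpSet_div
    (hRV : IsRegularlyVaryingTail ρ α) (h0 : ρ (Iio 0) = 0) (i : ι) {t δ : ℝ} (ht : 0 < t)
    (hδ : 0 < δ) :
    Tendsto (fun τ => (Measure.pi fun _ : ι => ρ).real (bigJumpSet i (t * τ) (δ * τ))
      / ρ.real (Ioi τ)) atTop (𝓝 (t ^ (-α))) := by
  have hsmall := (tendsto_measureReal_Icc_zero_atTop h0).comp (tendsto_id.const_mul_atTop hδ)
  have h := (hRV t ht).mul (hsmall.pow (Fintype.card ι - 1))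
  rw [one_pow, mul_one] at h
  refine h.congr fun τ => ?_
  simp only [measureReal_bigJumpSet, Function.comp_apply, id]
  ring

lemma IsRegularlyVaryingTail.tendsto_measureReal_bigJumpSet_div_div
    (hRV : IsRegularlyVaryingTail ρ α) (h0 : ρ (Iio 0) = 0) (i : ι) {t c δ : ℝ} (ht : 0 < t)
    (hc : 0 < c) (hδ : 0 < δ) :
    Tendsto (fun τ => (Measure.pi fun _ : ι => ρ).real (bigJumpSet i (t / c * τ) (δ * τ))
      / ρ.real (Ioi τ)) atTop (𝓝 (t ^ (-α) * c ^ α)) := by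
  rw [← inv_inv (c ^ α), ← rpow_neg hc.le, ← div_eq_mul_inv, ← div_rpow ht.le hc.le]
  exact hRV.tendsto_measureReal_bigJumpSet_div h0 i (div_pos ht hc) hδ

end ProductMeasure

section SingleBigJump

variable {ι : Type*} [Fintype ι] [DecidableEq ι] {ρ : Measure ℝ} [IsProbabilityMeasure ρ]
  {c : ι → ℝ} {α : ℝ}

lemma measureReal_setOf_lt_sum_sdiff_le (h0 : ρ (Iio 0) = 0) (hc : ∀ k, 0 < c k) {δ τ : ℝ}
    (hδ : 0 < δ) (hCδ : (∑ k, c k) * δ < 1) (hτ : 0 < τ) :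
    (Measure.pi fun _ : ι => ρ).real
        ({z | τ < ∑ k, c k * z k} \ ⋃ i, bigJumpSet i (1 / c i * τ) (δ * τ))
      ≤ ∑ i, (Measure.pi fun _ : ι => ρ).real
          (bigJumpSet i ((1 - (∑ k, c k) * δ) / c i * τ) (δ * τ))
        + (Measure.pi fun _ : ι => ρ).real (twoLargeSet (δ * τ))
        - ∑ i, (Measure.pi fun _ : ι => ρ).real (bigJumpSet i (1 / c i * τ) (δ * τ)) := by
  set μ := Measure.pi fun _ : ι => ρ
  set C := ∑ k, c k
  have hcover : {z | τ < ∑ k, c k * z k} ≤ᵐ[μ]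
      (twoLargeSet (δ * τ) ∪ ⋃ i, bigJumpSet i ((1 - C * δ) / c i * τ) (δ * τ) : Set _) := by
    filter_upwards [ae_nonneg_pi h0] with z hz hzT
    rcases mem_twoLargeSet_or_exists_mem_bigJumpSet hc (b := δ * τ) (by positivity)
      (by rw [← mul_assoc]; exact mul_lt_of_lt_one_left hτ hCδ) hz hzT with h | ⟨i, hi⟩
    · exact Or.inl h
    · refine Or.inr (mem_iUnion.2 ⟨i, ?_⟩)
      rwa [show (τ - C * (δ * τ)) / c i = (1 - C * δ) / c i * τ by ring] at hi
  rw [measureReal_sdiff (iUnion_subset (bigJumpSet_one_div_subset hc · _ τ))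
    (MeasurableSet.iUnion fun i => measurableSet_bigJumpSet _ _ _),
    measureReal_iUnion_fintype (pairwise_disjoint_bigJumpSet_one_div hc hδ hCδ hτ)
      fun i => measurableSet_bigJumpSet _ _ _, add_comm]
  gcongr
  exact (ENNReal.toReal_mono (by finiteness) (measure_mono_ae hcover)).trans
    ((measureReal_union_le _ _).trans (add_le_add_right (measureReal_iUnion_fintype_le _) _))

lemma abs_setIntegral_sub_sum_le_of_dominant (h0 : ρ (Iio 0) = 0) (hc : ∀ k, 0 < c k)
    {φ : (ι → ℝ) → ℝ} (hφ : Measurable φ) {M : ℝ} (hM : ∀ z, |φ z| ≤ M) {v : ι → ℝ}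
    {η δ τ : ℝ} (hδ : 0 < δ) (hCδ : (∑ k, c k) * δ < 1) (hτ : 0 < τ)
    (hη : ∀ z, 0 ≤ z → ∀ i, 0 < z i →
      ∑ k, c k * z k - c i * z i ≤ (∑ k, c k) * δ * ∑ k, c k * z k → |φ z - v i| ≤ η) :
    |∫ z in {z | τ < ∑ k, c k * z k}, φ z ∂(Measure.pi fun _ : ι => ρ)
        - ∑ i, v i * (Measure.pi fun _ : ι => ρ).real (bigJumpSet i (1 / c i * τ) (δ * τ))|
      ≤ η * ∑ i, (Measure.pi fun _ : ι => ρ).real (bigJumpSet i (1 / c i * τ) (δ * τ))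
        + M * (∑ i, (Measure.pi fun _ : ι => ρ).real
            (bigJumpSet i ((1 - (∑ k, c k) * δ) / c i * τ) (δ * τ))
          + (Measure.pi fun _ : ι => ρ).real (twoLargeSet (δ * τ))
          - ∑ i, (Measure.pi fun _ : ι => ρ).real (bigJumpSet i (1 / c i * τ) (δ * τ))) := by
  have hint : Integrable φ (Measure.pi fun _ : ι => ρ) := Integrable.of_bound
    hφ.aestronglyMeasurable M (ae_of_all _ fun z => (hM z).trans_eq' (Real.norm_eq_abs _))
  have hv : ∀ i, ∀ z ∈ bigJumpSet i (1 / c i * τ) (δ * τ), |φ z - v i| ≤ η := by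
    intro i z hz
    have hzT := bigJumpSet_one_div_subset hc i _ τ hz
    rw [mem_bigJumpSet] at hz
    have hzi : 0 < z i := (mul_pos (one_div_pos.2 (hc i)) hτ).trans hz.1
    have hz0 : 0 ≤ z := fun k => by
      by_cases hk : k = i
      · exact hk ▸ hzi.le
      · exact (hz.2 k hk).1
    refine hη z hz0 i hzi ((sum_mul_sub_mul_le (fun k => (hc k).le) (by positivity) hz.2).trans ?_)
    rw [← mul_assoc]
    exact mul_le_mul_of_nonneg_left hzT.le
      (mul_nonneg (Finset.sum_nonneg fun k _ => (hc k).le) hδ.le)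
  refine (abs_setIntegral_sub_sum_le hint hM (fun i => measurableSet_bigJumpSet _ _ _)
    (pairwise_disjoint_bigJumpSet_one_div hc hδ hCδ hτ) (bigJumpSet_one_div_subset hc · _ τ)
    hv).trans ?_
  gcongr
  · exact (abs_nonneg _).trans (hM 0)
  · exact measureReal_setOf_lt_sum_sdiff_le h0 hc hδ hCδ hτ

theorem IsRegularlyVaryingTail.exists_tendsto_and_eventually_dist_setIntegral_div_le
    (hRV : IsRegularlyVaryingTail ρ α) (h0 : ρ (Iio 0) = 0) (hc : ∀ k, 0 < c k)
    {φ : (ι → ℝ) → ℝ} (hφ : Measurable φ) {M : ℝ} (hM : ∀ z, |φ z| ≤ M) {v : ι → ℝ}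
    {η δ : ℝ} (hδ : 0 < δ) (hCδ : (∑ k, c k) * δ < 1)
    (hη : ∀ z, 0 ≤ z → ∀ i, 0 < z i →
      ∑ k, c k * z k - c i * z i ≤ (∑ k, c k) * δ * ∑ k, c k * z k → |φ z - v i| ≤ η) :
    ∃ u : ℝ → ℝ,
      Tendsto u atTop (𝓝 (η * ∑ i, c i ^ α
        + M * (∑ i, c i ^ α) * ((1 - (∑ k, c k) * δ) ^ (-α) - 1))) ∧
      ∀ᶠ τ in atTop, dist ((∫ z in {z | τ < ∑ k, c k * z k}, φ z ∂(Measure.pi fun _ : ι => ρ))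
        / ρ.real (Ioi τ)) (∑ i, c i ^ α * v i) ≤ u τ := by
  set μ := Measure.pi fun _ : ι => ρ
  set C := ∑ k, c k
  set L := ∑ i, c i ^ α * v i
  set a : ι → ℝ → ℝ := fun i τ => μ.real (bigJumpSet i (1 / c i * τ) (δ * τ)) / ρ.real (Ioi τ)
  set a' : ι → ℝ → ℝ := fun i τ =>
    μ.real (bigJumpSet i ((1 - C * δ) / c i * τ) (δ * τ)) / ρ.real (Ioi τ)
  set w : ℝ → ℝ := fun τ => μ.real (twoLargeSet (δ * τ)) / ρ.real (Ioi τ)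
  refine ⟨fun τ => η * ∑ i, a i τ + M * (∑ i, a' i τ + w τ - ∑ i, a i τ)
      + dist (∑ i, a i τ * v i) L, ?_, ?_⟩
  · have ha : ∀ i, Tendsto (a i) atTop (𝓝 (c i ^ α)) := fun i => by
      simpa only [one_rpow, one_mul] using
        hRV.tendsto_measureReal_bigJumpSet_div_div h0 i one_pos (hc i) hδ
    have ha' : ∀ i, Tendsto (a' i) atTop (𝓝 ((1 - C * δ) ^ (-α) * c i ^ α)) := fun i =>
      hRV.tendsto_measureReal_bigJumpSet_div_div h0 i (by linarith) (hc i) hδ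
    have hlim := (((tendsto_finsetSum Finset.univ fun i _ => ha i).const_mul η).add
      ((((tendsto_finsetSum Finset.univ fun i _ => ha' i).add
        (hRV.tendsto_measureReal_twoLargeSet_div (ι := ι) hδ)).sub
          (tendsto_finsetSum Finset.univ fun i _ => ha i)).const_mul M)).add
      ((tendsto_finsetSum Finset.univ fun i _ => (ha i).mul_const (v i)).dist
        (tendsto_const_nhds (x := L)))
    convert hlim using 2
    simp only [L, ← Finset.mul_sum, add_zero, dist_self]
    ring
  · filter_upwards [eventually_gt_atTop 0] with τ hτ
    refine (dist_div_le_of_abs_sub_le (hRV.measureReal_Ioi_pos τ)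
      (abs_setIntegral_sub_sum_le_of_dominant h0 hc hφ hM hδ hCδ hτ hη)).trans_eq ?_
    congr 1
    · simp only [a, a', w, ← Finset.sum_div]
      ring
    · rw [Finset.sum_div]
      exact congrArg₂ _ (Finset.sum_congr rfl fun i _ => by ring) rfl

theorem IsRegularlyVaryingTail.tendsto_setIntegral_div_measureReal_Ioi
    (hRV : IsRegularlyVaryingTail ρ α) (h0 : ρ (Iio 0) = 0) (hc : ∀ k, 0 < c k)
    {φ : (ι → ℝ) → ℝ} (hφ : Measurable φ) {M : ℝ} (hM : ∀ z, |φ z| ≤ M) {v : ι → ℝ}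
    (hφv : ∀ η > 0, ∃ κ > 0, ∀ z, 0 ≤ z → ∀ i, 0 < z i →
      ∑ k, c k * z k - c i * z i ≤ κ * ∑ k, c k * z k → |φ z - v i| ≤ η) :
    Tendsto (fun τ => (∫ z in {z | τ < ∑ k, c k * z k}, φ z ∂(Measure.pi fun _ : ι => ρ))
      / ρ.real (Ioi τ)) atTop (𝓝 (∑ i, c i ^ α * v i)) := by
  set C := ∑ k, c k
  set K := ∑ i, c i ^ α
  refine tendsto_of_forall_exists_eventually_dist_le fun ε hε => ?_
  obtain ⟨η, hη, hηK⟩ := exists_pos_mul_lt (half_pos hε) K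
  obtain ⟨κ, hκ, hφκ⟩ := hφv η hη
  have hCδ : Tendsto (fun δ => C * δ) (𝓝[>] 0) (𝓝 0) := by
    simpa using (tendsto_id.const_mul C).mono_left (nhdsWithin_le_nhds (a := (0 : ℝ)))
  have hpow : Tendsto (fun δ => M * K * ((1 - C * δ) ^ (-α) - 1)) (𝓝[>] 0) (𝓝 0) := by
    simpa using (((tendsto_const_nhds (x := (1 : ℝ))).sub hCδ).rpow_const
      (Or.inl (by norm_num))).sub_const 1 |>.const_mul (M * K)
  obtain ⟨δ, hδ, hCδ1, hCδκ, hδε⟩ := ((eventually_mem_nhdsWithin (a := (0 : ℝ)) (s := Ioi 0)).and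
    ((hCδ.eventually (eventually_lt_nhds one_pos)).and ((hCδ.eventually
      (eventually_le_nhds hκ)).and (hpow.eventually (eventually_lt_nhds (half_pos hε)))))).exists
  obtain ⟨u, hu, hle⟩ := hRV.exists_tendsto_and_eventually_dist_setIntegral_div_le h0 hc hφ hM
    hδ hCδ1 fun z hz i hzi hdom => hφκ z hz i hzi (hdom.trans (mul_le_mul_of_nonneg_right hCδκ
      (Finset.sum_nonneg fun k _ => mul_nonneg (hc k).le (hz k))))
  exact ⟨u, _, by linarith [mul_comm K η], hu, hle⟩

theorem IsRegularlyVaryingTail.tendsto_inv_measureReal_mul_setIntegral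
    (hRV : IsRegularlyVaryingTail ρ α) (h0 : ρ (Iio 0) = 0) (hc : ∀ k, 0 < c k)
    {φ : (ι → ℝ) → ℝ} (hφ : Measurable φ) {M : ℝ} (hM : ∀ z, |φ z| ≤ M) {v : ι → ℝ}
    (hφv : ∀ η > 0, ∃ κ > 0, ∀ z, 0 ≤ z → ∀ i, 0 < z i →
      ∑ k, c k * z k - c i * z i ≤ κ * ∑ k, c k * z k → |φ z - v i| ≤ η) :
    Tendsto (fun τ => ((Measure.pi fun _ : ι => ρ).real {z | τ < ∑ k, c k * z k})⁻¹
        * ∫ z in {z | τ < ∑ k, c k * z k}, φ z ∂(Measure.pi fun _ : ι => ρ))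
      atTop (𝓝 (∑ i, (c i ^ α / ∑ j, c j ^ α) * v i)) := by
  rcases isEmpty_or_nonempty ι with hι | hι
  · refine tendsto_const_nhds.congr' ?_
    filter_upwards [eventually_ge_atTop 0] with τ hτ
    simp [hτ.not_gt]
  have hK : 0 < ∑ j, c j ^ α :=
    Finset.sum_pos (fun j _ => rpow_pos_of_pos (hc j) α) Finset.univ_nonempty
  have hmass := hRV.tendsto_setIntegral_div_measureReal_Ioi (φ := fun _ => 1) (v := fun _ => 1)
    h0 hc measurable_const (fun _ => abs_one.le)
    fun η hη => ⟨1, one_pos, fun _ _ _ _ _ => by simp [hη.le]⟩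
  simp only [setIntegral_const, smul_eq_mul, mul_one] at hmass
  have h := (hmass.inv₀ hK.ne').mul (hRV.tendsto_setIntegral_div_measureReal_Ioi h0 hc hφ hM hφv)
  convert h using 1
  · ext τ
    have hF := (hRV.measureReal_Ioi_pos τ).ne'
    field_simp
  · rw [Finset.mul_sum]
    exact congrArg _ (Finset.sum_congr rfl fun i _ => by ring)

end SingleBigJump

section LinearModel

open Matrix

variable {m n : Type*} [Fintype m] [Fintype n] {A : Matrix m n ℝ}

lemma sum_abs_mulVec_eq (hA : ∀ i j, 0 ≤ A i j) {z : n → ℝ} (hz : 0 ≤ z) :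
    ∑ j, |(A *ᵥ z) j| = ∑ k, (∑ j, A j k) * z k := by
  simp only [mulVec, dotProduct, Finset.sum_mul]
  rw [Finset.sum_comm]
  exact Finset.sum_congr rfl fun j _ =>
    abs_of_nonneg (Finset.sum_nonneg fun k _ => mul_nonneg (hA j k) (hz k))

lemma dist_smul_mulVec_le [DecidableEq n] (hA : ∀ i j, 0 ≤ A i j) {z : n → ℝ} (hz : 0 ≤ z)
    {i : n} (hci : 0 < ∑ j, A j i) (hzi : 0 < z i) :
    dist ((∑ k, (∑ j, A j k) * z k)⁻¹ • A *ᵥ z) (fun j => A j i / ∑ j', A j' i)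
      ≤ (∑ k, (∑ j, A j k) * z k - (∑ j, A j i) * z i) / ∑ k, (∑ j, A j k) * z k := by
  set c : n → ℝ := fun k => ∑ j, A j k
  set S := ∑ k, c k * z k
  have hrest : ∀ j, 0 ≤ (A *ᵥ z) j - A j i * z i ∧ (A *ᵥ z) j - A j i * z i ≤ S - c i * z i := by
    intro j
    simp only [S, mulVec, dotProduct, ← Finset.add_sum_erase _ _ (Finset.mem_univ i),
      add_sub_cancel_left]
    exact ⟨Finset.sum_nonneg fun k _ => mul_nonneg (hA j k) (hz k),
      Finset.sum_le_sum fun k _ => mul_le_mul_of_nonneg_right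
        (Finset.single_le_sum (fun j' _ => hA j' k) (Finset.mem_univ j)) (hz k)⟩
  have hSi : c i * z i ≤ S := Finset.single_le_sum (f := fun k => c k * z k)
    (fun k _ => mul_nonneg (Finset.sum_nonneg fun j _ => hA j k) (hz k)) (Finset.mem_univ i)
  have hS : 0 < S := (mul_pos hci hzi).trans_le hSi
  refine (dist_pi_le_iff (div_nonneg (by linarith) hS.le)).2 fun j => ?_
  obtain ⟨hR0, hRr⟩ := hrest j
  have hAji : 0 ≤ A j i := hA j i
  have hAc : A j i ≤ c i := Finset.single_le_sum (fun j' _ => hA j' i) (Finset.mem_univ j)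
  have hnum : |c i * ((A *ᵥ z) j - A j i * z i) - (S - c i * z i) * A j i|
      ≤ c i * (S - c i * z i) := abs_sub_le_iff.2 ⟨by nlinarith, by nlinarith⟩
  rw [Real.dist_eq, Pi.smul_apply, smul_eq_mul,
    show S⁻¹ * (A *ᵥ z) j - A j i / c i
      = (c i * ((A *ᵥ z) j - A j i * z i) - (S - c i * z i) * A j i) / (S * c i) by
        field_simp [show c i ≠ 0 from hci.ne']; ring,
    abs_div, abs_of_pos (mul_pos hS hci), div_le_div_iff₀ (mul_pos hS hci) hS]
  nlinarith

lemma exists_pos_abs_apply_smul_mulVec_sub_le [DecidableEq n] (hA : ∀ i j, 0 ≤ A i j)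
    (hcol : ∀ i, 0 < ∑ j, A j i) {f : (m → ℝ) → ℝ} (hf : Continuous f) {η : ℝ} (hη : 0 < η) :
    ∃ κ > 0, ∀ z, 0 ≤ z → ∀ i, 0 < z i →
      ∑ k, (∑ j, A j k) * z k - (∑ j, A j i) * z i ≤ κ * ∑ k, (∑ j, A j k) * z k →
      |f ((∑ k, (∑ j, A j k) * z k)⁻¹ • A *ᵥ z) - f fun j => A j i / ∑ j', A j' i| ≤ η := by
  obtain ⟨κ, hκ, hfκ⟩ := exists_pos_forall_dist_le_imp_dist_le
    (ω := fun i j => A j i / ∑ j', A j' i) (fun _ => hf.continuousAt) hη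
  refine ⟨κ, hκ, fun z hz i hzi hdom => ?_⟩
  have hS : 0 < ∑ k, (∑ j, A j k) * z k := (mul_pos (hcol i) hzi).trans_le
    (Finset.single_le_sum (f := fun k => (∑ j, A j k) * z k)
      (fun k _ => mul_nonneg (hcol k).le (hz k)) (Finset.mem_univ i))
  rw [← Real.dist_eq]
  exact hfκ i _ ((dist_smul_mulVec_le hA hz (hcol i) hzi).trans (div_le_of_le_mul₀ hS.le hκ.le hdom))

lemma integral_condAngularL1_map_mulVec {d : ℕ} {ρ : Measure ℝ} [IsProbabilityMeasure ρ]
    (h0 : ρ (Iio 0) = 0) {A : Matrix (Fin d) n ℝ} (hA : ∀ i j, 0 ≤ A i j)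
    {f : (Fin d → ℝ) → ℝ} (hf : Measurable f) (τ : ℝ) :
    ∫ x, f x ∂(condAngularL1 d ((Measure.pi fun _ : n => ρ).map A.mulVec) τ)
      = ((Measure.pi fun _ : n => ρ).real {z | τ < ∑ k, (∑ j, A j k) * z k})⁻¹
        * ∫ z in {z | τ < ∑ k, (∑ j, A j k) * z k},
            f ((∑ k, (∑ j, A j k) * z k)⁻¹ • A *ᵥ z) ∂(Measure.pi fun _ : n => ρ) := by
  set μ := Measure.pi fun _ : n => ρ
  have hmulVec : Measurable A.mulVec := (continuous_const.matrix_mulVec continuous_id).measurable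
  have hnorm : Measurable fun x : Fin d → ℝ => ∑ j, |x j| := by fun_prop
  have hnormalize : Measurable fun x : Fin d → ℝ => (∑ j, |x j|)⁻¹ • x :=
    hnorm.inv.smul measurable_id
  have hT : MeasurableSet {x : Fin d → ℝ | τ < ∑ j, |x j|} :=
    measurableSet_lt measurable_const hnorm
  have hnorm_eq : ∀ᵐ z ∂μ, ∑ j, |(A *ᵥ z) j| = ∑ k, (∑ j, A j k) * z k := by
    filter_upwards [ae_nonneg_pi h0] with z hz using sum_abs_mulVec_eq hA hz
  have hpre : A.mulVec ⁻¹' {x | τ < ∑ j, |x j|} =ᵐ[μ] {z | τ < ∑ k, (∑ j, A j k) * z k} := by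
    filter_upwards [hnorm_eq] with z hz
    change (τ < ∑ j, |(A *ᵥ z) j|) = (τ < ∑ k, (∑ j, A j k) * z k)
    rw [hz]
  rw [condAngularL1, integral_map hnormalize.aemeasurable hf.aestronglyMeasurable,
    integral_smul_measure, ENNReal.toReal_inv, smul_eq_mul, Measure.map_apply hmulVec hT,
    setIntegral_map (f := fun x : Fin d → ℝ => f ((∑ j, |x j|)⁻¹ • x)) hT
      (hf.comp hnormalize).aestronglyMeasurable hmulVec.aemeasurable,
    setIntegral_congr_set hpre, measureReal_def, measure_congr hpre]
  refine congrArg _ (integral_congr_ae (ae_restrict_of_ae ?_))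
  filter_upwards [hnorm_eq] with z hz
  simp only [hz]

end LinearModel

theorem linear_model_spectral_limit_general (d m : ℕ) (α : ℝ)
    (ρ : Measure ℝ) [IsProbabilityMeasure ρ] (hρ_nonneg : ρ (Set.Iio 0) = 0)
    (hRV : ∀ t : ℝ, 0 < t →
      Tendsto (fun x : ℝ => (ρ (Set.Ioi (t * x))).toReal / (ρ (Set.Ioi x)).toReal)
        atTop (𝓝 (t ^ (-α))))
    (A : Matrix (Fin d) (Fin m) ℝ) (hA : ∀ i j, 0 ≤ A i j)
    (hcol : ∀ i, 0 < ∑ j, A j i)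
    (f : BoundedContinuousFunction (Fin d → ℝ) ℝ) :
    Tendsto (fun τ : ℝ => ∫ x, f x ∂(condAngularL1 d
        ((Measure.pi fun _ : Fin m => ρ).map A.mulVec) τ))
      atTop
      (𝓝 (∑ i, ((∑ j, A j i) ^ α / ∑ i', (∑ j, A j i') ^ α) *
        f (fun j => A j i / ∑ j', A j' i))) := by
  have hΘ : Measurable fun z : Fin m → ℝ => (∑ k, (∑ j, A j k) * z k)⁻¹ • A.mulVec z :=
    (Finset.measurable_sum _ fun k _ => (measurable_pi_apply k).const_mul _).inv.smul
      (continuous_const.matrix_mulVec continuous_id).measurable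
  have hlim := IsRegularlyVaryingTail.tendsto_inv_measureReal_mul_setIntegral (α := α) hRV
    hρ_nonneg hcol (f.continuous.measurable.comp hΘ)
    (fun z => (Real.norm_eq_abs _).symm.trans_le (f.norm_coe_le_norm _))
    fun η hη => exists_pos_abs_apply_smul_mulVec_sub_le hA hcol f.continuous hη
  exact hlim.congr fun τ =>
    (integral_condAngularL1_map_mulVec hρ_nonneg hA f.continuous.measurable τ).symm

/-- Limit law (Lemma 2.1): if `Z` has i.i.d. nonnegative components whose
common law `ρ` has a regularly varying tail with index `-α`, and
`A ∈ ℝ₊^{d×m}` has all column ℓ1-norms positive, then for `X = AZ` the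
conditional law of `X/‖X‖₁` given `‖X‖₁ > τ` converges weakly as `τ → ∞` to
`K_A = Σᵢ (‖A_{·i}‖₁^α / Σⱼ ‖A_{·j}‖₁^α) δ_{A_{·i}/‖A_{·i}‖₁}`. -/
theorem linear_model_spectral_limit (d m : ℕ) (α : ℝ) (hα : 0 < α)
    (ρ : Measure ℝ) [IsProbabilityMeasure ρ] (hρ_nonneg : ρ (Set.Iio 0) = 0)
    (hRV : ∀ t : ℝ, 0 < t →
      Tendsto (fun x : ℝ => (ρ (Set.Ioi (t * x))).toReal / (ρ (Set.Ioi x)).toReal)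
        atTop (𝓝 (t ^ (-α))))
    (A : Matrix (Fin d) (Fin m) ℝ) (hA : ∀ i j, 0 ≤ A i j)
    (hcol : ∀ i, 0 < ∑ j, A j i)
    (f : BoundedContinuousFunction (Fin d → ℝ) ℝ) :
    Tendsto (fun τ : ℝ => ∫ x, f x ∂(condAngularL1 d
        ((Measure.pi fun _ : Fin m => ρ).map A.mulVec) τ))
      atTop
      (𝓝 (∑ i, ((∑ j, A j i) ^ α / ∑ i', (∑ j, A j i') ^ α) *
        f (fun j => A j i / ∑ j', A j' i))) :=
  linear_model_spectral_limit_general d m α ρ hρ_nonneg hRV A hA hcol f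
end

section
/- Let K be a probability measure supported on a finite set of m points in a metric space of diameter at most 2, and let 𝕂_n be the empirical measure of n i.i.d. samples from K. Then E[W_p^p(𝕂_n, K)] ≤ √(2^{2p+3} m log 2 / n) for every p ≥ 1. -/
open MeasureTheory Filter Topology Real
open scoped ENNReal

/-- The `p`-th power of the `p`-th order Wasserstein distance: the infimum over
all couplings `γ` of `μ` and `ν` of `∫ d(x,y)^p dγ`. -/
noncomputable def WpPow {S : Type*} [MeasurableSpace S] [MetricSpace S]
    (p : ℝ) (μ ν : Measure S) : ℝ≥0∞ :=
  ⨅ γ ∈ {γ : Measure (S × S) | γ.map Prod.fst = μ ∧ γ.map Prod.snd = ν},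
    ∫⁻ xy, ENNReal.ofReal (dist xy.1 xy.2 ^ p) ∂γ

open ProbabilityTheory

lemma measure_eq_sum_dirac' {S : Type*} [MeasurableSpace S] [MeasurableSingletonClass S]
    (T : Finset S) (w : Measure S) (hsupp : w ((↑T : Set S)ᶜ) = 0) :
    w = ∑ x ∈ T, w {x} • Measure.dirac x := by
  classical
  ext s hs
  rw [Measure.finset_sum_apply]
  have h0 : w (s \ ↑T) = 0 := measure_mono_null (fun x hx => hx.2) hsupp
  have h1 : w s = w (s ∩ ↑T) := by
    rw [← measure_inter_add_diff s T.finite_toSet.measurableSet, h0, add_zero]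
  have h2 : (s ∩ ↑T : Set S) = ⋃ x ∈ T.filter (· ∈ s), ({x} : Set S) := by
    ext y
    simp only [Set.mem_inter_iff, Set.mem_iUnion, Finset.mem_filter, Set.mem_singleton_iff,
      Finset.mem_coe, exists_prop]
    constructor
    · rintro ⟨hy1, hy2⟩; exact ⟨y, ⟨hy2, hy1⟩, rfl⟩
    · rintro ⟨x, ⟨hx1, hx2⟩, rfl⟩; exact ⟨hx2, hx1⟩
  rw [h1, h2, measure_biUnion_finset ?_ (fun x _ => measurableSet_singleton x)]
  · rw [Finset.sum_filter]
    apply Finset.sum_congr rfl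
    intro x _
    rw [Measure.smul_apply, Measure.dirac_apply' _ hs, Set.indicator_apply, smul_eq_mul]
    by_cases hxs : x ∈ s <;> simp [hxs]
  · intro x hx y hy hxy
    simp only [Function.onFun, Set.disjoint_singleton_left, Set.mem_singleton_iff]
    exact hxy

lemma inf_add_tsub' (a b : ℝ≥0∞) : a ⊓ b + (a - b) = a := by
  rcases le_total a b with h | h
  · simp [inf_eq_left.2 h, tsub_eq_zero_of_le h]
  · rw [inf_eq_right.2 h, add_comm, tsub_add_cancel_of_le h]

lemma WpPow_le_of_finite_support {S : Type*} [MeasurableSpace S] [MetricSpace S] [BorelSpace S]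
    (p : ℝ) (hp : 1 ≤ p) (hdiam : ∀ x y : S, dist x y ≤ 2)
    (T : Finset S) (μ ν : Measure S) [IsProbabilityMeasure μ] [IsProbabilityMeasure ν]
    (hμ : μ ((↑T : Set S)ᶜ) = 0) (hν : ν ((↑T : Set S)ᶜ) = 0) :
    WpPow p μ ν ≤ ENNReal.ofReal (2 ^ p) * ∑ x ∈ T, (μ {x} - ν {x}) := by
  classical
  set a : S → ℝ≥0∞ := fun x => μ {x} with ha_def
  set b : S → ℝ≥0∞ := fun x => ν {x} with hb_def
  have hμrep := measure_eq_sum_dirac' T μ hμ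
  have hνrep := measure_eq_sum_dirac' T ν hν
  have hsum_a : ∑ x ∈ T, a x = 1 := by
    have := congrArg (fun w : Measure S => w Set.univ) hμrep
    simpa [ha_def, Measure.finset_sum_apply, Measure.smul_apply] using this.symm
  have hsum_b : ∑ x ∈ T, b x = 1 := by
    have := congrArg (fun w : Measure S => w Set.univ) hνrep
    simpa [hb_def, Measure.finset_sum_apply, Measure.smul_apply] using this.symm
  set c : ℝ≥0∞ := ∑ x ∈ T, (a x - b x) with hc_def
  have hmin1 : ∑ x ∈ T, (a x ⊓ b x) + c = 1 := by
    rw [hc_def, ← Finset.sum_add_distrib, ← hsum_a]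
    exact Finset.sum_congr rfl fun x _ => inf_add_tsub' _ _
  have hmin_ne_top : ∑ x ∈ T, (a x ⊓ b x) ≠ ∞ := by
    intro h; rw [h] at hmin1; simp at hmin1
  have hc' : ∑ x ∈ T, (b x - a x) = c := by
    have hmin2 : ∑ x ∈ T, (a x ⊓ b x) + ∑ x ∈ T, (b x - a x) = 1 := by
      rw [← Finset.sum_add_distrib, ← hsum_b]
      exact Finset.sum_congr rfl fun x _ => by rw [inf_comm]; exact inf_add_tsub' _ _
    exact ((ENNReal.add_right_inj hmin_ne_top).mp (hmin2.trans hmin1.symm))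
  have hc_le_one : c ≤ 1 := hmin1 ▸ le_add_self
  have hc_ne_top : c ≠ ∞ := (hc_le_one.trans_lt ENNReal.one_lt_top).ne
  set γ : Measure (S × S) :=
    (∑ x ∈ T, (a x ⊓ b x) • Measure.dirac ((x, x) : S × S)) +
      c⁻¹ • ∑ x ∈ T, ∑ y ∈ T, ((a x - b x) * (b y - a y)) • Measure.dirac ((x, y) : S × S)
    with hγ_def
  -- key diagonal identities
  have hdiag1 : ∀ x ∈ T, a x ⊓ b x + c⁻¹ * ((a x - b x) * c) = a x := by
    intro x hx
    rcases eq_or_ne c 0 with hc0 | hc0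
    · have hz : a x - b x = 0 := by
        have h := hc0
        rw [hc_def] at h
        exact (Finset.sum_eq_zero_iff.mp h) x hx
      have hab : a x ≤ b x := tsub_eq_zero_iff_le.mp hz
      rw [hz, hc0, inf_eq_left.2 hab]; simp
    · rw [mul_comm (a x - b x) c, ← mul_assoc, ENNReal.inv_mul_cancel hc0 hc_ne_top, one_mul]
      exact inf_add_tsub' _ _
  have hdiag2 : ∀ y ∈ T, a y ⊓ b y + c⁻¹ * ((b y - a y) * c) = b y := by
    intro y hy
    rcases eq_or_ne c 0 with hc0 | hc0
    · have hz : b y - a y = 0 := by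
        have h : ∑ x ∈ T, (b x - a x) = 0 := by rw [hc', hc0]
        exact (Finset.sum_eq_zero_iff.mp h) y hy
      have hab : b y ≤ a y := tsub_eq_zero_iff_le.mp hz
      rw [hz, hc0, inf_eq_right.2 hab]; simp
    · rw [mul_comm (b y - a y) c, ← mul_assoc, ENNReal.inv_mul_cancel hc0 hc_ne_top, one_mul,
        inf_comm]
      exact inf_add_tsub' _ _
  have hfst : γ.map Prod.fst = μ := by
    ext s hs
    have hpre : MeasurableSet (Prod.fst ⁻¹' s : Set (S × S)) := measurable_fst hs
    rw [Measure.map_apply measurable_fst hs, hγ_def, hμrep]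
    rw [Measure.add_apply, Measure.smul_apply, Measure.finset_sum_apply,
      Measure.finset_sum_apply, Measure.finset_sum_apply]
    simp only [Measure.finset_sum_apply, Measure.smul_apply, Measure.dirac_apply' _ hpre,
      Measure.dirac_apply' _ hs, smul_eq_mul]
    have hind : ∀ x y : S,
        Set.indicator (Prod.fst ⁻¹' s) (1 : S × S → ℝ≥0∞) (x, y) = Set.indicator s 1 x := by
      intro x y; simp [Set.indicator_apply, Set.mem_preimage]
    simp only [hind]
    have hinner : ∀ x : S,
        ∑ y ∈ T, ((a x - b x) * (b y - a y)) * Set.indicator s 1 x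
          = ((a x - b x) * c) * Set.indicator s 1 x := by
      intro x
      rw [← Finset.sum_mul, ← Finset.mul_sum, hc']
    simp only [hinner, Finset.mul_sum, ← Finset.sum_add_distrib]
    apply Finset.sum_congr rfl
    intro x hx
    by_cases hxs : x ∈ s
    · simp only [Set.indicator_of_mem hxs, Pi.one_apply, mul_one]
      exact hdiag1 x hx
    · simp [Set.indicator_of_notMem hxs]
  have hsnd : γ.map Prod.snd = ν := by
    ext s hs
    have hpre : MeasurableSet (Prod.snd ⁻¹' s : Set (S × S)) := measurable_snd hs
    rw [Measure.map_apply measurable_snd hs, hγ_def, hνrep]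
    rw [Measure.add_apply, Measure.smul_apply, Measure.finset_sum_apply,
      Measure.finset_sum_apply, Measure.finset_sum_apply]
    simp only [Measure.finset_sum_apply, Measure.smul_apply, Measure.dirac_apply' _ hpre,
      Measure.dirac_apply' _ hs, smul_eq_mul]
    have hind : ∀ x y : S,
        Set.indicator (Prod.snd ⁻¹' s) (1 : S × S → ℝ≥0∞) (x, y) = Set.indicator s 1 y := by
      intro x y; simp [Set.indicator_apply, Set.mem_preimage]
    simp only [hind]
    rw [Finset.sum_comm]
    have hinner : ∀ y : S,
        ∑ x ∈ T, ((a x - b x) * (b y - a y)) * Set.indicator s 1 y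
          = ((b y - a y) * c) * Set.indicator s 1 y := by
      intro y
      rw [← Finset.sum_mul, ← Finset.sum_mul, mul_comm c (b y - a y)]
    simp only [hinner, Finset.mul_sum, ← Finset.sum_add_distrib]
    apply Finset.sum_congr rfl
    intro y hy
    by_cases hys : y ∈ s
    · simp only [Set.indicator_of_mem hys, Pi.one_apply, mul_one]
      exact hdiag2 y hy
    · simp [Set.indicator_of_notMem hys]
  have hcost : (∫⁻ xy, ENNReal.ofReal (dist xy.1 xy.2 ^ p) ∂γ) ≤ ENNReal.ofReal (2 ^ p) * c := by
    rw [hγ_def, lintegral_add_measure, lintegral_smul_measure]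
    simp only [lintegral_finset_sum_measure, lintegral_smul_measure, lintegral_dirac,
      smul_eq_mul]
    have hzero : ∀ x : S, ENNReal.ofReal (dist x x ^ p) = 0 := by
      intro x
      rw [dist_self, Real.zero_rpow (by linarith : p ≠ 0), ENNReal.ofReal_zero]
    simp only [hzero, mul_zero, Finset.sum_const_zero, zero_add]
    have hterm : ∀ x y : S, ENNReal.ofReal (dist x y ^ p) ≤ ENNReal.ofReal (2 ^ p) := fun x y =>
      ENNReal.ofReal_le_ofReal (Real.rpow_le_rpow dist_nonneg (hdiam x y) (by linarith))
    calc c⁻¹ * ∑ x ∈ T, ∑ y ∈ T, ((a x - b x) * (b y - a y)) * ENNReal.ofReal (dist x y ^ p)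
        ≤ c⁻¹ * ∑ x ∈ T, ∑ y ∈ T, ((a x - b x) * (b y - a y)) * ENNReal.ofReal (2 ^ p) := by
          exact mul_le_mul_right (Finset.sum_le_sum fun x _ => Finset.sum_le_sum fun y _ =>
            mul_le_mul_right (hterm x y) _) _
      _ = c⁻¹ * (c * (c * ENNReal.ofReal (2 ^ p))) := by
          simp only [mul_assoc, ← Finset.mul_sum]
          rw [← Finset.sum_mul, ← Finset.sum_mul, hc']
      _ ≤ 1 * (c * ENNReal.ofReal (2 ^ p)) := by
          rw [← mul_assoc]
          apply mul_le_mul_left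
          rcases eq_or_ne c 0 with hc0 | hc0
          · simp [hc0]
          · rw [ENNReal.inv_mul_cancel hc0 hc_ne_top]
      _ = ENNReal.ofReal (2 ^ p) * c := by rw [one_mul, mul_comm]
  exact le_trans (iInf₂_le γ ⟨hfst, hsnd⟩) hcost

lemma sq_dev_bound {Ω : Type*} [MeasurableSpace Ω] (P : Measure Ω) [IsProbabilityMeasure P]
    {n : ℕ} (hn : 0 < n) (V : Fin n → Ω → ℝ) (hVmeas : ∀ i, Measurable (V i))
    (hind : ∀ i j, i ≠ j → IndepFun (V i) (V j) P)
    {qr : ℝ} (hVval : ∀ i ω, V i ω = 0 ∨ V i ω = 1)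
    (hmean : ∀ i, ∫ ω, V i ω ∂P = qr) :
    ∫ ω, ((n : ℝ)⁻¹ * ∑ i, V i ω - qr) ^ 2 ∂P ≤ qr / n := by
  have hq0 : 0 ≤ qr := by
    rw [← hmean ⟨0, hn⟩]
    apply integral_nonneg
    intro ω
    rcases hVval ⟨0, hn⟩ ω with h | h <;> simp [h]
  set W : Fin n → Ω → ℝ := fun i ω => V i ω - qr with hW_def
  have hWmeas : ∀ i, Measurable (W i) := fun i => (hVmeas i).sub measurable_const
  have hWbd : ∀ i ω, |W i ω| ≤ 1 + qr := by
    intro i ω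
    rcases hVval i ω with h | h <;> rw [hW_def] <;> simp only [h] <;> rw [abs_le] <;>
      constructor <;> nlinarith
  have hbdint : ∀ (f : Ω → ℝ) (C : ℝ), Measurable f → (∀ ω, |f ω| ≤ C) → Integrable f P := by
    intro f C hf hC
    exact (integrable_const C).mono' hf.aestronglyMeasurable
      (ae_of_all _ fun ω => by simpa using hC ω)
  have hWint : ∀ i, Integrable (W i) P := fun i => hbdint _ _ (hWmeas i) (hWbd i)
  have hWmean : ∀ i, ∫ ω, W i ω ∂P = 0 := by
    intro i
    rw [hW_def]
    simp only
    rw [integral_sub (hbdint _ 1 (hVmeas i) fun ω => by rcases hVval i ω with h | h <;> simp [h])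
      (integrable_const qr), hmean i, integral_const]
    simp
  have hprod_int : ∀ i j, Integrable (fun ω => W i ω * W j ω) P := by
    intro i j
    refine hbdint _ ((1 + qr) * (1 + qr)) ((hWmeas i).mul (hWmeas j)) fun ω => ?_
    rw [abs_mul]
    exact mul_le_mul (hWbd i ω) (hWbd j ω) (abs_nonneg _) (by linarith)
  have hcross : ∀ i j, i ≠ j → ∫ ω, W i ω * W j ω ∂P = 0 := by
    intro i j hij
    have hWind : IndepFun (W i) (W j) P := by
      have := (hind i j hij).comp (φ := fun t => t - qr) (ψ := fun t => t - qr)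
        (measurable_id.sub measurable_const) (measurable_id.sub measurable_const)
      exact this
    have h := IndepFun.integral_mul_eq_mul_integral hWind (hWint i).aestronglyMeasurable (hWint j).aestronglyMeasurable
    have h2 : ∫ ω, W i ω * W j ω ∂P = integral P (W i * W j) := rfl
    rw [h2, h, hWmean i, hWmean j, mul_zero]
  have hdiagv : ∀ i, ∫ ω, W i ω * W i ω ∂P = qr - qr ^ 2 := by
    intro i
    have hident : ∀ ω, W i ω * W i ω = V i ω * (1 - 2 * qr) + qr ^ 2 := by
      intro ω
      rcases hVval i ω with h | h <;> rw [hW_def] <;> simp only [h] <;> ring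
    simp only [hident]
    rw [integral_add ((hbdint (fun ω => V i ω * (1 - 2 * qr)) (1 + 2 * |qr|) ((hVmeas i).mul measurable_const) fun ω => ?_))
      (integrable_const _), integral_mul_const, hmean i, integral_const]
    · simp; ring
    · rcases hVval i ω with h | h <;> rw [h]
      · simp only [zero_mul, abs_zero]; positivity
      · rw [one_mul]
        rcases abs_cases (1 - 2 * qr) with ⟨h1, _⟩ | ⟨h1, _⟩ <;>
          rcases abs_cases qr with ⟨h3, _⟩ | ⟨h3, _⟩ <;> linarith
  -- main computation
  have hsum : ∀ ω, ((n : ℝ)⁻¹ * ∑ i, V i ω - qr) ^ 2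
      = (n : ℝ)⁻¹ ^ 2 * ∑ i, ∑ j, W i ω * W j ω := by
    intro ω
    have hnne : (n : ℝ) ≠ 0 := Nat.cast_ne_zero.mpr hn.ne'
    have h1 : (n : ℝ)⁻¹ * ∑ i, V i ω - qr = (n : ℝ)⁻¹ * ∑ i, W i ω := by
      rw [hW_def]
      simp only
      rw [Finset.sum_sub_distrib, Finset.sum_const, Finset.card_univ, Fintype.card_fin,
        mul_sub, nsmul_eq_mul, ← mul_assoc, inv_mul_cancel₀ hnne, one_mul]
    rw [h1, mul_pow, ← Finset.sum_mul_sum]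
    ring
  simp only [hsum]
  rw [integral_const_mul, integral_finset_sum _ (fun i _ =>
    integrable_finset_sum _ (fun j _ => hprod_int i j))]
  have hrow : ∀ i : Fin n, ∫ ω, ∑ j, W i ω * W j ω ∂P = qr - qr ^ 2 := by
    intro i
    rw [integral_finset_sum _ (fun j _ => hprod_int i j)]
    rw [Finset.sum_eq_single_of_mem i (Finset.mem_univ i)
      (fun j _ hji => hcross i j (Ne.symm hji))]
    exact hdiagv i
  simp only [hrow, Finset.sum_const, Finset.card_univ, Fintype.card_fin, nsmul_eq_mul]
  have hnpos : (0 : ℝ) < n := Nat.cast_pos.mpr hn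
  rw [div_eq_mul_inv qr]
  have : (n : ℝ)⁻¹ ^ 2 * ((n : ℝ) * (qr - qr ^ 2)) = (qr - qr ^ 2) * (n : ℝ)⁻¹ := by
    field_simp
  rw [this]
  have h2 : qr - qr ^ 2 ≤ qr := by nlinarith
  exact mul_le_mul_of_nonneg_right h2 (by positivity)

lemma term_lintegral_bound {Ω : Type*} [MeasurableSpace Ω] (P : Measure Ω)
    [IsProbabilityMeasure P] {n : ℕ} (hn : 0 < n) {Z : Ω → ℝ} (hZmeas : Measurable Z)
    (hZbd : ∀ ω, |Z ω| ≤ 2) {qr : ℝ} (hqr : 0 ≤ qr)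
    (hvar : ∫ ω, Z ω ^ 2 ∂P ≤ qr / n) :
    ∫⁻ ω, ENNReal.ofReal (Z ω) ∂P ≤ ENNReal.ofReal (Real.sqrt (qr / n)) := by
  have h2 : Real.HolderConjugate 2 2 := Real.HolderConjugate.two_two
  have hf : AEMeasurable (fun ω => ENNReal.ofReal (Z ω)) P :=
    (ENNReal.measurable_ofReal.comp hZmeas).aemeasurable
  have hHolder := ENNReal.lintegral_mul_le_Lp_mul_Lq P h2 hf aemeasurable_const
    (g := fun _ => (1 : ℝ≥0∞))
  simp only [Pi.mul_apply, mul_one, ENNReal.one_rpow, lintegral_one, measure_univ] at hHolder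
  refine le_trans hHolder ?_
  have hple : (∫⁻ ω, ENNReal.ofReal (Z ω) ^ (2 : ℝ) ∂P) ≤ ENNReal.ofReal (qr / n) := by
    have hmono : ∀ ω, ENNReal.ofReal (Z ω) ^ (2 : ℝ) ≤ ENNReal.ofReal (Z ω ^ 2) := by
      intro ω
      rcases le_or_gt 0 (Z ω) with h | h
      · rw [ENNReal.ofReal_rpow_of_nonneg h (by norm_num), Real.rpow_two]
      · rw [ENNReal.ofReal_of_nonpos h.le, ENNReal.zero_rpow_of_pos (by norm_num)]
        exact zero_le
    refine le_trans (lintegral_mono hmono) ?_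
    have hint : Integrable (fun ω => Z ω ^ 2) P := by
      refine (integrable_const (4 : ℝ)).mono' (hZmeas.pow_const 2).aestronglyMeasurable
        (ae_of_all _ fun ω => ?_)
      have := hZbd ω
      rw [Real.norm_eq_abs, abs_pow]
      nlinarith [abs_nonneg (Z ω)]
    rw [← ofReal_integral_eq_lintegral_ofReal hint (ae_of_all _ fun ω => sq_nonneg (Z ω))]
    exact ENNReal.ofReal_le_ofReal hvar
  calc (∫⁻ ω, ENNReal.ofReal (Z ω) ^ (2 : ℝ) ∂P) ^ (1 / (2 : ℝ))
      ≤ ENNReal.ofReal (qr / n) ^ (1 / (2 : ℝ)) := ENNReal.rpow_le_rpow hple (by norm_num)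
    _ = ENNReal.ofReal (Real.sqrt (qr / n)) := by
        rw [ENNReal.ofReal_rpow_of_nonneg (by positivity) (by norm_num),
          ← Real.sqrt_eq_rpow]

/-- If `K` is a probability measure supported on `m` points in a metric space
of diameter at most `2` and `𝕂_n` is the empirical measure of `n` i.i.d.
samples from `K`, then
`E[W_p^p(𝕂_n, K)] ≤ √(2^{2p+3} m log 2 / n)` for any `p ≥ 1`. -/
theorem empirical_WpPow_bound {S : Type*} [MeasurableSpace S] [MetricSpace S]
    [BorelSpace S] (m n : ℕ) (hn : 0 < n) (p : ℝ) (hp : 1 ≤ p)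
    (hdiam : ∀ x y : S, dist x y ≤ 2)
    (K : Measure S) [IsProbabilityMeasure K]
    (T : Finset S) (hT : T.card = m) (hsupp : K ((↑T : Set S)ᶜ) = 0)
    {Ω : Type*} [MeasurableSpace Ω] (P : Measure Ω) [IsProbabilityMeasure P]
    (X : Fin n → Ω → S) (hmeas : ∀ i, Measurable (X i))
    (hiid : ProbabilityTheory.iIndepFun X P)
    (hlaw : ∀ i, P.map (X i) = K) :
    (∫⁻ ω, WpPow p ((n : ℝ≥0∞)⁻¹ • ∑ i, Measure.dirac (X i ω)) K ∂P) ≤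
      ENNReal.ofReal (Real.sqrt (2 ^ (2 * p + 3) * m * Real.log 2 / n)) := by
  classical
  have hnR : (0 : ℝ) < n := Nat.cast_pos.mpr hn
  -- the indicator random variables
  set V : S → Fin n → Ω → ℝ := fun x i ω => (X i ⁻¹' {x}).indicator (fun _ => (1 : ℝ)) ω
    with hV_def
  set qr : S → ℝ := fun x => (K {x}).toReal with hqr_def
  set Z : S → Ω → ℝ := fun x ω => (n : ℝ)⁻¹ * ∑ i, V x i ω - qr x with hZ_def
  have hsingmeas : ∀ x : S, MeasurableSet ({x} : Set S) := fun x => measurableSet_singleton x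
  have hVmeas : ∀ x i, Measurable (V x i) := fun x i =>
    Measurable.indicator measurable_const ((hmeas i) (hsingmeas x))
  have hVval : ∀ x i ω, V x i ω = 0 ∨ V x i ω = 1 := by
    intro x i ω
    by_cases h : ω ∈ X i ⁻¹' {x}
    · right; simp [hV_def, Set.indicator_of_mem h]
    · left; simp [hV_def, Set.indicator_of_notMem h]
  have hVnonneg : ∀ x i ω, 0 ≤ V x i ω := by
    intro x i ω; rcases hVval x i ω with h | h <;> rw [h] <;> norm_num
  have hVle : ∀ x i ω, V x i ω ≤ 1 := by
    intro x i ω; rcases hVval x i ω with h | h <;> rw [h] <;> norm_num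
  have hZmeas : ∀ x, Measurable (Z x) := by
    intro x
    apply Measurable.sub _ measurable_const
    exact measurable_const.mul (Finset.measurable_sum _ fun i _ => hVmeas x i)
  have hK1 : ∀ x : S, K {x} ≤ 1 := fun x => prob_le_one
  have hqr0 : ∀ x, 0 ≤ qr x := fun x => ENNReal.toReal_nonneg
  have hqr1 : ∀ x, qr x ≤ 1 := by
    intro x
    rw [hqr_def]
    simpa using ENNReal.toReal_mono (by norm_num) (hK1 x)
  have hAvg : ∀ x ω, 0 ≤ (n : ℝ)⁻¹ * ∑ i, V x i ω ∧ (n : ℝ)⁻¹ * ∑ i, V x i ω ≤ 1 := by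
    intro x ω
    constructor
    · exact mul_nonneg (by positivity) (Finset.sum_nonneg fun i _ => hVnonneg x i ω)
    · have h1 : ∑ i, V x i ω ≤ (n : ℝ) := by
        calc ∑ i, V x i ω ≤ ∑ _i : Fin n, (1 : ℝ) :=
              Finset.sum_le_sum fun i _ => hVle x i ω
          _ = n := by simp
      calc (n : ℝ)⁻¹ * ∑ i, V x i ω ≤ (n : ℝ)⁻¹ * n :=
            mul_le_mul_of_nonneg_left h1 (by positivity)
        _ = 1 := inv_mul_cancel₀ hnR.ne'
  have hZbd : ∀ x ω, |Z x ω| ≤ 2 := by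
    intro x ω
    rw [hZ_def, abs_le]
    have h1 := hAvg x ω
    constructor <;> simp only <;> [linarith [hqr1 x, h1.1]; linarith [hqr0 x, h1.2]]
  -- the representation of the empirical measure value
  have hrep : ∀ ω x, ((n : ℝ≥0∞)⁻¹ • ∑ i, Measure.dirac (X i ω)) {x}
      = ENNReal.ofReal ((n : ℝ)⁻¹ * ∑ i, V x i ω) := by
    intro ω x
    rw [Measure.smul_apply, Measure.finset_sum_apply, smul_eq_mul]
    rw [ENNReal.ofReal_mul (by positivity),
      ENNReal.ofReal_sum_of_nonneg (fun i _ => hVnonneg x i ω)]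
    congr 1
    · rw [ENNReal.ofReal_inv_of_pos hnR, ENNReal.ofReal_natCast]
    · apply Finset.sum_congr rfl
      intro i _
      rw [Measure.dirac_apply]
      by_cases h : X i ω = x <;> simp [hV_def, Set.indicator_apply, h]
  have hKx : ∀ x : S, K {x} = ENNReal.ofReal (qr x) :=
    fun x => (ENNReal.ofReal_toReal ((hK1 x).trans_lt ENNReal.one_lt_top).ne).symm
  have hdiff : ∀ ω x, ((n : ℝ≥0∞)⁻¹ • ∑ i, Measure.dirac (X i ω)) {x} - K {x}
      = ENNReal.ofReal (Z x ω) := by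
    intro ω x
    rw [hrep ω x, hKx x, ← ENNReal.ofReal_sub _ (hqr0 x)]
  -- almost everywhere, all samples are in T
  have hae : ∀ᵐ ω ∂P, ∀ i, X i ω ∈ (↑T : Set S) := by
    rw [ae_all_iff]
    intro i
    rw [ae_iff]
    have hTm : MeasurableSet ((↑T : Set S)ᶜ) := T.finite_toSet.measurableSet.compl
    have : {ω | ¬ X i ω ∈ (↑T : Set S)} = X i ⁻¹' ((↑T : Set S)ᶜ) := rfl
    rw [this, ← Measure.map_apply (hmeas i) hTm, hlaw i, hsupp]
  -- the pointwise bound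
  have hprob : ∀ ω, IsProbabilityMeasure ((n : ℝ≥0∞)⁻¹ • ∑ i, Measure.dirac (X i ω)) := by
    intro ω
    constructor
    rw [Measure.smul_apply, Measure.finset_sum_apply, smul_eq_mul]
    simp only [measure_univ, Finset.sum_const, Finset.card_univ, Fintype.card_fin,
      nsmul_eq_mul, mul_one]
    exact ENNReal.inv_mul_cancel (by exact_mod_cast hn.ne') (by simp)
  have hstep1 : ∀ᵐ ω ∂P, WpPow p ((n : ℝ≥0∞)⁻¹ • ∑ i, Measure.dirac (X i ω)) K
      ≤ ENNReal.ofReal (2 ^ p) * ∑ x ∈ T, ENNReal.ofReal (Z x ω) := by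
    filter_upwards [hae] with ω hω
    have hsupp' : ((n : ℝ≥0∞)⁻¹ • ∑ i, Measure.dirac (X i ω)) ((↑T : Set S)ᶜ) = 0 := by
      rw [Measure.smul_apply, Measure.finset_sum_apply, smul_eq_mul]
      have : ∀ i : Fin n, Measure.dirac (X i ω) ((↑T : Set S)ᶜ) = 0 := by
        intro i
        rw [Measure.dirac_apply' _ T.finite_toSet.measurableSet.compl,
          Set.indicator_of_notMem (by simpa using hω i)]
      simp [this]
    haveI := hprob ω
    have hWp := @WpPow_le_of_finite_support S _ _ _ p hp hdiam T
      ((n : ℝ≥0∞)⁻¹ • ∑ i, Measure.dirac (X i ω)) K (hprob ω) ‹IsProbabilityMeasure K› hsupp' hsupp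
    exact le_trans hWp (le_of_eq (congrArg (fun t => ENNReal.ofReal (2 ^ p) * t)
      (Finset.sum_congr rfl fun x _ => hdiff ω x)))
  refine le_trans (lintegral_mono_ae hstep1) ?_
  rw [lintegral_const_mul _ (Finset.measurable_sum _ fun x _ => (hZmeas x).ennreal_ofReal)]
  rw [lintegral_finset_sum _ fun x _ => (hZmeas x).ennreal_ofReal]
  -- per-point bound
  have hterm : ∀ x ∈ T, ∫⁻ ω, ENNReal.ofReal (Z x ω) ∂P
      ≤ ENNReal.ofReal (Real.sqrt (qr x / n)) := by
    intro x _
    have hind : ∀ i j : Fin n, i ≠ j → IndepFun (V x i) (V x j) P := by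
      intro i j hij
      have hg : Measurable (fun y : S => ({x} : Set S).indicator (fun _ => (1 : ℝ)) y) :=
        Measurable.indicator measurable_const (hsingmeas x)
      have hVeq : ∀ k : Fin n,
          V x k = (fun y : S => ({x} : Set S).indicator (fun _ => (1 : ℝ)) y) ∘ X k := by
        intro k
        funext ω
        rw [hV_def]
        simp only [Function.comp_apply]
        by_cases h : X k ω = x
        · rw [Set.indicator_of_mem (by simpa using h), Set.indicator_of_mem (by simpa using h)]
        · rw [Set.indicator_of_notMem (by simpa using h),
            Set.indicator_of_notMem (by simpa using h)]
      rw [hVeq i, hVeq j]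
      exact (hiid.indepFun hij).comp hg hg
    have hmean : ∀ i, ∫ ω, V x i ω ∂P = qr x := by
      intro i
      have h1 : ∫ ω, V x i ω ∂P = (P (X i ⁻¹' {x})).toReal • (1 : ℝ) := by
        rw [hV_def]
        exact integral_indicator_const (1 : ℝ) ((hmeas i) (hsingmeas x))
      rw [h1, ← Measure.map_apply (hmeas i) (hsingmeas x), hlaw i, smul_eq_mul, mul_one, hqr_def]
    have hvar := sq_dev_bound P hn (V x) (hVmeas x) hind (hVval x) hmean
    exact term_lintegral_bound P hn (hZmeas x) (hZbd x) (hqr0 x) hvar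
  refine le_trans (mul_le_mul_right (Finset.sum_le_sum hterm) _) ?_
  -- sum the square roots
  rw [← ENNReal.ofReal_sum_of_nonneg (fun x _ => Real.sqrt_nonneg _), ← ENNReal.ofReal_mul
    (by positivity)]
  apply ENNReal.ofReal_le_ofReal
  -- now a pure real inequality
  have hKfin : ∀ x ∈ T, K {x} ≠ ∞ := fun x _ => ((hK1 x).trans_lt ENNReal.one_lt_top).ne
  have hsum_qr : ∑ x ∈ T, qr x = 1 := by
    have hKrep := measure_eq_sum_dirac' T K hsupp
    have h1 : K Set.univ = 1 := ‹IsProbabilityMeasure K›.measure_univ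
    rw [hKrep] at h1
    simp only [Measure.finset_sum_apply, Measure.smul_apply, smul_eq_mul, Measure.dirac_apply,
      Set.indicator_univ, Pi.one_apply, mul_one] at h1
    rw [hqr_def]
    simp only
    rw [← ENNReal.toReal_sum hKfin, h1, ENNReal.toReal_one]
  have h2p : (0 : ℝ) < 2 ^ p := Real.rpow_pos_of_pos two_pos p
  have hstep : ∑ x ∈ T, Real.sqrt (qr x / n) ≤ Real.sqrt (m / n) := by
    have h1 : ∀ x ∈ T, Real.sqrt (qr x / n) = Real.sqrt (qr x) / Real.sqrt n :=
      fun x _ => Real.sqrt_div (hqr0 x) n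
    rw [Finset.sum_congr rfl h1, ← Finset.sum_div,
      Real.sqrt_div (Nat.cast_nonneg m) (n : ℝ)]
    have hsqn : (0 : ℝ) < Real.sqrt n := Real.sqrt_pos.mpr hnR
    rw [div_le_div_iff_of_pos_right hsqn]
    rw [Real.le_sqrt (Finset.sum_nonneg fun x _ => Real.sqrt_nonneg _) (Nat.cast_nonneg m)]
    calc (∑ x ∈ T, Real.sqrt (qr x)) ^ 2 ≤ T.card * ∑ x ∈ T, Real.sqrt (qr x) ^ 2 :=
          sq_sum_le_card_mul_sum_sq
      _ = m := by
          rw [hT, Finset.sum_congr rfl fun x _ => Real.sq_sqrt (hqr0 x), hsum_qr, mul_one]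
  have hfinal : 2 ^ p * Real.sqrt ((m : ℝ) / n)
      ≤ Real.sqrt (2 ^ (2 * p + 3) * m * Real.log 2 / n) := by
    have heq1 : (2 : ℝ) ^ p * Real.sqrt ((m : ℝ) / n)
        = Real.sqrt ((2 ^ p) ^ 2 * ((m : ℝ) / n)) := by
      rw [Real.sqrt_mul (by positivity) _, Real.sqrt_sq h2p.le]
    rw [heq1]
    apply Real.sqrt_le_sqrt
    have hA : ((2 : ℝ) ^ p) ^ 2 = 2 ^ (2 * p) := by
      rw [sq, ← Real.rpow_add two_pos]
      ring_nf
    have h8 : ((2 : ℝ) ^ (3 : ℝ)) = 8 := by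
      rw [show (3 : ℝ) = ((3 : ℕ) : ℝ) by norm_num, Real.rpow_natCast]
      norm_num
    have hB : (2 : ℝ) ^ (2 * p + 3) = 2 ^ (2 * p) * 8 := by
      rw [Real.rpow_add two_pos, h8]
    rw [hA, hB]
    have hlog : (1 : ℝ) ≤ 8 * Real.log 2 := by nlinarith [Real.log_two_gt_d9]
    have key : 2 ^ (2 * p) * ((m : ℝ) / n) * 1 ≤ 2 ^ (2 * p) * ((m : ℝ) / n) * (8 * Real.log 2) :=
      mul_le_mul_of_nonneg_left hlog (by positivity)
    have heq : 2 ^ (2 * p) * 8 * (m : ℝ) * Real.log 2 / n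
        = 2 ^ (2 * p) * ((m : ℝ) / n) * (8 * Real.log 2) := by ring
    rw [heq]
    linarith [key]
  calc (2 : ℝ) ^ p * ∑ x ∈ T, Real.sqrt (qr x / n)
      ≤ 2 ^ p * Real.sqrt ((m : ℝ) / n) := mul_le_mul_of_nonneg_left hstep h2p.le
    _ ≤ _ := hfinal
end
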